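/- arXiv:1503.06052 — 9 statements merged into one kernel-verified Lean document; each statement's English description precedes it below -/
import Mathlib

section
/- Let Γ be a simple game and let S₁, S₂ be losing coalitions. If there exist minimal winning coalitions S₃, S₄ such that for every player p, the number of indices i ∈ {3,4} with p ∈ Sᵢ is at most the number of indices i ∈ {1,2} with p ∈ Sᵢ, then there exist winning coalitions S₃′ ⊇ S₃ and S₄′ ⊇ S₄ such that (S₁,S₂,S₃′,S₄′) is a 2-trade application, i.e., for every player p, |{i ∈ {1,2} : p ∈ Sᵢ}| = |{i ∈ {3,4} : p ∈ Sᵢ′}|. -/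
/-! Enlarge `S₃` and `S₄` by every player of `S₁ ∩ S₂`, and `S₃` also by every player of
`S₁ ∪ S₂` lying in neither `S₃` nor `S₄`. Upward closure keeps both coalitions winning, and the
bound `cnt S₃ S₄ ≤ cnt S₁ S₂` means that each player is added exactly as often as it is missing. -/

/-- Number of occurrences of player `p` in the pair of coalitions `(A, B)`. -/
def cnt {N : Type*} [DecidableEq N] (A B : Finset N) (p : N) : ℕ :=
  (if p ∈ A then 1 else 0) + (if p ∈ B then 1 else 0)

open Finset

theorem cnt_eq_cnt_fillUp {N : Type*} [DecidableEq N] {A B C D : Finset N} {p : N}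
    (h : cnt C D p ≤ cnt A B p) :
    cnt A B p = cnt (C ∪ A ∩ B ∪ (A ∪ B) \ (C ∪ D)) (D ∪ A ∩ B) p := by
  unfold cnt at h ⊢
  simp only [mem_union, mem_inter, mem_sdiff] at h ⊢
  split_ifs at h ⊢ <;> tauto

theorem minimal_winning_fillup_two_trade_general
    {N : Type*} [DecidableEq N] (W : Set (Finset N))
    (hmono : ∀ S T : Finset N, S ∈ W → S ⊆ T → T ∈ W)
    (S1 S2 S3 S4 : Finset N)
    (h3 : S3 ∈ W ∧ ∀ T : Finset N, T ⊂ S3 → T ∉ W)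
    (h4 : S4 ∈ W ∧ ∀ T : Finset N, T ⊂ S4 → T ∉ W)
    (hle : ∀ p : N, cnt S3 S4 p ≤ cnt S1 S2 p) :
    ∃ S3' S4' : Finset N, S3 ⊆ S3' ∧ S4 ⊆ S4' ∧ S3' ∈ W ∧ S4' ∈ W ∧
      ∀ p : N, cnt S1 S2 p = cnt S3' S4' p := by
  have hS3 : S3 ⊆ S3 ∪ S1 ∩ S2 ∪ (S1 ∪ S2) \ (S3 ∪ S4) :=
    subset_union_left.trans subset_union_left
  have hS4 : S4 ⊆ S4 ∪ S1 ∩ S2 := subset_union_left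
  exact ⟨_, _, hS3, hS4, hmono _ _ h3.1 hS3, hmono _ _ h4.1 hS4,
    fun p => cnt_eq_cnt_fillUp (hle p)⟩

/-- If `S₁, S₂` are losing and `S₃, S₄` are minimal winning coalitions such that
every player occurs in `(S₃,S₄)` at most as often as in `(S₁,S₂)`, then `S₃,S₄`
can be enlarged to winning coalitions `S₃', S₄'` making `(S₁,S₂,S₃',S₄')` a
2-trade application. -/
theorem minimal_winning_fillup_two_trade
    {N : Type*} [Fintype N] [DecidableEq N] (W : Set (Finset N))
    (hfull : Finset.univ ∈ W) (hempty : (∅ : Finset N) ∉ W)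
    (hmono : ∀ S T : Finset N, S ∈ W → S ⊆ T → T ∈ W)
    (S1 S2 S3 S4 : Finset N)
    (h1 : S1 ∉ W) (h2 : S2 ∉ W)
    (h3 : S3 ∈ W ∧ ∀ T : Finset N, T ⊂ S3 → T ∉ W)
    (h4 : S4 ∈ W ∧ ∀ T : Finset N, T ⊂ S4 → T ∉ W)
    (hle : ∀ p : N, cnt S3 S4 p ≤ cnt S1 S2 p) :
    ∃ S3' S4' : Finset N, S3 ⊆ S3' ∧ S4 ⊆ S4' ∧ S3' ∈ W ∧ S4' ∈ W ∧
      ∀ p : N, cnt S1 S2 p = cnt S3' S4' p :=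
  minimal_winning_fillup_two_trade_general W hmono S1 S2 S3 S4 h3 h4 hle
end

section
/- Let Γ be a simple game and let S₁, S₂ be winning coalitions. If there exist maximal losing coalitions S₃, S₄ such that for every player p, the number of indices i ∈ {3,4} with p ∈ Sᵢ is at least the number of indices i ∈ {1,2} with p ∈ Sᵢ, then there exist losing coalitions S₃′ ⊆ S₃ and S₄′ ⊆ S₄ such that for every player p, |{i ∈ {1,2} : p ∈ Sᵢ}| = |{i ∈ {3,4} : p ∈ Sᵢ′}|. -/
/-- Keep `p` in `A` when `c p ≥ 1`, and in `B` when `c p = 2`, or when `c p = 1` but `p ∉ A`. -/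
theorem exists_subset_subset_cnt_eq {N : Type*} [DecidableEq N] (A B : Finset N)
    (c : N → ℕ) (hc : ∀ p, c p ≤ cnt A B p) :
    ∃ A' B' : Finset N, A' ⊆ A ∧ B' ⊆ B ∧ ∀ p, cnt A' B' p = c p := by
  refine ⟨A.filter (fun p => 1 ≤ c p), B.filter (fun p => c p = 2 ∨ (c p = 1 ∧ p ∉ A)),
    Finset.filter_subset _ _, Finset.filter_subset _ _, fun p => ?_⟩
  have hp := hc p
  simp only [cnt, Finset.mem_filter] at hp ⊢
  grind

theorem maximal_losing_shrink_two_trade_general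
    {N : Type*} [DecidableEq N] (W : Set (Finset N))
    (hmono : ∀ S T : Finset N, S ∈ W → S ⊆ T → T ∈ W)
    (S1 S2 S3 S4 : Finset N)
    (h3 : S3 ∉ W ∧ ∀ T : Finset N, S3 ⊂ T → T ∈ W)
    (h4 : S4 ∉ W ∧ ∀ T : Finset N, S4 ⊂ T → T ∈ W)
    (hge : ∀ p : N, cnt S1 S2 p ≤ cnt S3 S4 p) :
    ∃ S3' S4' : Finset N, S3' ⊆ S3 ∧ S4' ⊆ S4 ∧ S3' ∉ W ∧ S4' ∉ W ∧
      ∀ p : N, cnt S1 S2 p = cnt S3' S4' p := by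
  obtain ⟨S3', S4', hS3', hS4', hcnt⟩ := exists_subset_subset_cnt_eq S3 S4 _ hge
  exact ⟨S3', S4', hS3', hS4', fun h => h3.1 (hmono _ _ h hS3'),
    fun h => h4.1 (hmono _ _ h hS4'), fun p => (hcnt p).symm⟩

/-- If `S₁, S₂` are winning and `S₃, S₄` are maximal losing coalitions such that
every player occurs in `(S₃,S₄)` at least as often as in `(S₁,S₂)`, then `S₃,S₄`
can be shrunk to losing coalitions `S₃', S₄'` making `(S₁,S₂,S₃',S₄')` a
2-trade application. -/
theorem maximal_losing_shrink_two_trade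
    {N : Type*} [Fintype N] [DecidableEq N] (W : Set (Finset N))
    (hfull : Finset.univ ∈ W) (hempty : (∅ : Finset N) ∉ W)
    (hmono : ∀ S T : Finset N, S ∈ W → S ⊆ T → T ∈ W)
    (S1 S2 S3 S4 : Finset N)
    (h1 : S1 ∈ W) (h2 : S2 ∈ W)
    (h3 : S3 ∉ W ∧ ∀ T : Finset N, S3 ⊂ T → T ∈ W)
    (h4 : S4 ∉ W ∧ ∀ T : Finset N, S4 ⊂ T → T ∈ W)
    (hge : ∀ p : N, cnt S1 S2 p ≤ cnt S3 S4 p) :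
    ∃ S3' S4' : Finset N, S3' ⊆ S3 ∧ S4' ⊆ S4 ∧ S3' ∉ W ∧ S4' ∉ W ∧
      ∀ p : N, cnt S1 S2 p = cnt S3' S4' p :=
  maximal_losing_shrink_two_trade_general W hmono S1 S2 S3 S4 h3 h4 hge
end

section
/- A simple game Γ is j-trade if and only if it admits a j-trade application in which all j losing coalitions are maximal losing coalitions. -/
/-- A `j`-trade application for the game `W`: `j` winning coalitions `Sw` and
`j` losing coalitions `Sl` such that every player occurs the same number of
times among the winning coalitions and the losing coalitions. -/
def IsTradeApp {N : Type*} [DecidableEq N] (W : Set (Finset N)) (j : ℕ)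
    (Sw Sl : Fin j → Finset N) : Prop :=
  (∀ i, Sw i ∈ W) ∧ (∀ i, Sl i ∉ W) ∧
  ∀ p : N, (Finset.univ.filter fun i => p ∈ Sw i).card
         = (Finset.univ.filter fun i => p ∈ Sl i).card

open Classical in
/-- A simple game is `j`-trade iff it admits a `j`-trade application in which
all `j` losing coalitions are maximal losing coalitions. -/
theorem j_trade_iff_trade_app_with_maximal_losing
    {N : Type*} [Fintype N] [DecidableEq N] (W : Set (Finset N))
    (hfull : Finset.univ ∈ W) (hempty : (∅ : Finset N) ∉ W)
    (hmono : ∀ S T : Finset N, S ∈ W → S ⊆ T → T ∈ W) (j : ℕ) :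
    (∃ Sw Sl : Fin j → Finset N, IsTradeApp W j Sw Sl) ↔
    (∃ Sw Sl : Fin j → Finset N, IsTradeApp W j Sw Sl ∧
      ∀ i, Sl i ∉ W ∧ ∀ T : Finset N, Sl i ⊂ T → T ∈ W) := by
  constructor
  · rintro ⟨Sw, Sl, hw, hl, hbal⟩
    -- maximal losing supersets of the losing coalitions
    have hM : ∀ i, ∃ M : Finset N, Sl i ⊆ M ∧ M ∉ W ∧ ∀ T, M ⊂ T → T ∈ W := by
      intro i
      set s : Finset (Finset N) :=
        Finset.univ.filter (fun T => Sl i ⊆ T ∧ T ∉ W) with hs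
      have hne : s.Nonempty := ⟨Sl i, by simp [hs, hl i]⟩
      obtain ⟨M, hMs, hMmax⟩ := Finset.exists_max_image s Finset.card hne
      simp only [hs, Finset.mem_filter, Finset.mem_univ, true_and] at hMs
      refine ⟨M, hMs.1, hMs.2, fun T hT => ?_⟩
      by_contra hTW
      have hTs : T ∈ s := by
        simp only [hs, Finset.mem_filter, Finset.mem_univ, true_and]
        exact ⟨hMs.1.trans hT.subset, hTW⟩
      have := hMmax T hTs
      exact absurd (Finset.card_lt_card hT) (not_lt.mpr this)
    choose M hMsub hMl hMmax using hM
    -- split losing counts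
    have hsplit : ∀ p : N,
        (Finset.univ.filter fun i => p ∈ M i).card
        = (Finset.univ.filter fun i => p ∈ Sl i).card
          + (Finset.univ.filter fun i => p ∈ M i ∧ p ∉ Sl i).card := by
      intro p
      have e1 : (Finset.univ.filter fun i => p ∈ Sl i)
          = (Finset.univ.filter fun i => p ∈ M i).filter (fun i => p ∈ Sl i) := by
        ext i
        simp only [Finset.mem_filter, Finset.mem_univ, true_and]
        exact ⟨fun h => ⟨hMsub i h, h⟩, fun h => h.2⟩
      have e2 : (Finset.univ.filter fun i => p ∈ M i ∧ p ∉ Sl i)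
          = (Finset.univ.filter fun i => p ∈ M i).filter (fun i => p ∉ Sl i) := by
        rw [Finset.filter_filter]
      rw [e1, e2, Finset.card_filter_add_card_filter_not]
    -- choose compensating indices for each player
    have key : ∀ p : N, ∃ A : Finset (Fin j),
        A ⊆ Finset.univ.filter (fun i => p ∉ Sw i) ∧
        A.card = (Finset.univ.filter fun i => p ∈ M i ∧ p ∉ Sl i).card := by
      intro p
      have h1 : (Finset.univ.filter fun i => p ∈ Sw i).card
          + (Finset.univ.filter fun i => p ∉ Sw i).card = j := by
        rw [Finset.card_filter_add_card_filter_not]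
        simp
      have h2 : (Finset.univ.filter fun i => p ∈ M i).card ≤ j := by
        simpa using Finset.card_filter_le Finset.univ (fun i => p ∈ M i)
      have h0 := hsplit p
      have hb := hbal p
      have h3 : (Finset.univ.filter fun i => p ∈ M i ∧ p ∉ Sl i).card
          ≤ (Finset.univ.filter fun i => p ∉ Sw i).card := by omega
      obtain ⟨A, hA1, hA2⟩ := Finset.exists_subset_card_eq h3
      exact ⟨A, hA1, hA2⟩
    choose A hAsub hAcard using key
    refine ⟨fun i => Sw i ∪ Finset.univ.filter (fun p => i ∈ A p), M,
      ⟨?_, hMl, ?_⟩, fun i => ⟨hMl i, hMmax i⟩⟩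
    · intro i
      exact hmono _ _ (hw i) Finset.subset_union_left
    · intro p
      have hdisj : ∀ i : Fin j, i ∈ A p → p ∉ Sw i := by
        intro i hi
        have := hAsub p hi
        simpa using this
      have : (Finset.univ.filter fun i =>
          p ∈ Sw i ∪ Finset.univ.filter (fun q => i ∈ A q))
          = (Finset.univ.filter fun i => p ∈ Sw i) ∪ A p := by
        ext i
        simp only [Finset.mem_filter, Finset.mem_union, Finset.mem_univ, true_and]
      have hd : Disjoint (Finset.univ.filter fun i => p ∈ Sw i) (A p) := by
        rw [Finset.disjoint_left]
        intro i hi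
        simp only [Finset.mem_filter, Finset.mem_univ, true_and] at hi
        exact fun hA => hdisj i hA hi
      rw [this, Finset.card_union_of_disjoint hd, hAcard, hbal, hsplit]
  · rintro ⟨Sw, Sl, h, _⟩
    exact ⟨Sw, Sl, h⟩
end

section
/- In the game Γ(φ) defined from a CNF formula φ (with literals X, clauses X₁,…,X_m, and extra players a,b), a coalition S is losing if and only if at least one of the following holds: (i) S ⊆ N \ {a,b}; (ii) S ⊆ N \ (Xᵢ ∪ {b}) for some clause i; (iii) S ⊆ N \ {a, xⱼ, ¬xⱼ} for some variable j; (iv) S ⊆ N \ (Xᵢ ∪ {xⱼ, ¬xⱼ}) for some i and j. -/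
/-- Players of the game `Γ(φ)`: a literal `(s, v)` (meaning `x_v` if `s = true`
and `¬x_v` if `s = false`), or one of the two extra players `a` (`Sum.inr true`)
and `b` (`Sum.inr false`). -/
abbrev PlayerStd (n : ℕ) := (Bool × Fin n) ⊕ Bool

/-- Winning coalitions of the game `Γ(φ)` associated with a CNF formula with
clauses `C i`. -/
def gammaW {n m : ℕ} (C : Fin m → Finset (Bool × Fin n)) :
    Set (Finset (PlayerStd n)) :=
  {Y | (Sum.inr true ∈ Y ∧ ∀ i, ∃ l ∈ C i, Sum.inl l ∈ Y) ∨
       (Sum.inr false ∈ Y ∧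
         ∀ v : Fin n, Sum.inl (true, v) ∈ Y ∨ Sum.inl (false, v) ∈ Y)}

/-- In `Γ(φ)`, a coalition `S` is losing iff
(i) `S ⊆ N \ {a,b}`, or (ii) `S ⊆ N \ (Xᵢ ∪ {b})` for some clause `i`, or
(iii) `S ⊆ N \ {a, x_v, ¬x_v}` for some variable `v`, or
(iv) `S ⊆ N \ (Xᵢ ∪ {x_v, ¬x_v})` for some `i` and `v`. -/
theorem gammaW_losing_characterization (n m : ℕ) (hn : 0 < n) (hm : 0 < m)
    (C : Fin m → Finset (Bool × Fin n)) (hC : ∀ i, (C i).Nonempty)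
    (S : Finset (PlayerStd n)) :
    S ∉ gammaW C ↔
      (S ⊆ Finset.univ \ ({Sum.inr true, Sum.inr false} : Finset (PlayerStd n))) ∨
      (∃ i, S ⊆ Finset.univ \ ((C i).image Sum.inl ∪ {Sum.inr false})) ∨
      (∃ v : Fin n, S ⊆ Finset.univ \
        ({Sum.inr true, Sum.inl (true, v), Sum.inl (false, v)} : Finset (PlayerStd n))) ∨
      (∃ i, ∃ v : Fin n, S ⊆ Finset.univ \
        ((C i).image Sum.inl ∪ {Sum.inl (true, v), Sum.inl (false, v)})) := by
  have key : ∀ T : Finset (PlayerStd n), (S ⊆ Finset.univ \ T ↔ ∀ x ∈ T, x ∉ S) := by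
    intro T
    simp only [Finset.subset_iff, Finset.mem_sdiff, Finset.mem_univ, true_and]
    exact ⟨fun h x hx hxS => h hxS hx, fun h x hxS hxT => h x hxT hxS⟩
  simp only [gammaW, Set.mem_setOf_eq, not_or, not_and_or, key, Finset.mem_union, Finset.mem_insert,
    Finset.mem_singleton, Finset.mem_image]
  push_neg
  constructor
  · rintro ⟨ha, hb⟩
    rcases ha with ha | ⟨i, hi⟩ <;> rcases hb with hb | ⟨v, hv1, hv2⟩
    · exact Or.inl (by rintro x (rfl | rfl) <;> assumption)
    · exact Or.inr (Or.inr (Or.inl ⟨v, by rintro x (rfl | rfl | rfl) <;> assumption⟩))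
    · refine Or.inr (Or.inl ⟨i, ?_⟩)
      rintro x (⟨l, hl, rfl⟩ | rfl)
      · exact hi l hl
      · exact hb
    · refine Or.inr (Or.inr (Or.inr ⟨i, v, ?_⟩))
      rintro x (⟨l, hl, rfl⟩ | rfl | rfl)
      · exact hi l hl
      · exact hv1
      · exact hv2
  · rintro (h | ⟨i, h⟩ | ⟨v, h⟩ | ⟨i, v, h⟩)
    · exact ⟨Or.inl (h _ (Or.inl rfl)), Or.inl (h _ (Or.inr rfl))⟩
    · exact ⟨Or.inr ⟨i, fun l hl => h _ (Or.inl ⟨l, hl, rfl⟩)⟩, Or.inl (h _ (Or.inr rfl))⟩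
    · exact ⟨Or.inl (h _ (Or.inl rfl)),
        Or.inr ⟨v, h _ (Or.inr (Or.inl rfl)), h _ (Or.inr (Or.inr rfl))⟩⟩
    · exact ⟨Or.inr ⟨i, fun l hl => h _ (Or.inl ⟨l, hl, rfl⟩)⟩,
        Or.inr ⟨v, h _ (Or.inr (Or.inl rfl)), h _ (Or.inr (Or.inr rfl))⟩⟩
end

section
/- Let φ be a satisfiable CNF formula and Γ(φ) the associated simple game on N = X ∪ {a,b}. Let S₁ = {a,b} and S₂ = X, which are losing coalitions (assuming n ≥ 1 and m ≥ 1). Let τ be a satisfying truth assignment, S₃ = {a} ∪ {literals made true by τ} and S₄ = {b} ∪ {literals made false by τ}. Then S₃ and S₄ are winning, and (S₁,S₂,S₃,S₄) is a 2-trade application: every player of N occurs the same number of times in {S₁,S₂} as in {S₃,S₄}. -/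
/-- If `τ` satisfies `φ`, then `S₁ = {a,b}` and `S₂ = X` are losing,
`S₃ = {a} ∪ {true literals}` and `S₄ = {b} ∪ {false literals}` are winning,
and `(S₁,S₂,S₃,S₄)` is a 2-trade application. -/
theorem gammaW_satisfiable_two_trade (n m : ℕ) (hn : 0 < n) (hm : 0 < m)
    (C : Fin m → Finset (Bool × Fin n)) (hC : ∀ i, (C i).Nonempty)
    (τ : Fin n → Bool) (hτ : ∀ i, ∃ l ∈ C i, τ l.2 = l.1) :
    ({Sum.inr true, Sum.inr false} : Finset (PlayerStd n)) ∉ gammaW C ∧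
    ((Finset.univ : Finset (Bool × Fin n)).image Sum.inl) ∉ gammaW C ∧
    insert (Sum.inr true)
      ((Finset.univ.filter fun l : Bool × Fin n => τ l.2 = l.1).image Sum.inl)
      ∈ gammaW C ∧
    insert (Sum.inr false)
      ((Finset.univ.filter fun l : Bool × Fin n => τ l.2 ≠ l.1).image Sum.inl)
      ∈ gammaW C ∧
    ∀ p : PlayerStd n,
      cnt ({Sum.inr true, Sum.inr false} : Finset (PlayerStd n))
          ((Finset.univ : Finset (Bool × Fin n)).image Sum.inl) p =
      cnt (insert (Sum.inr true)
            ((Finset.univ.filter fun l : Bool × Fin n => τ l.2 = l.1).image Sum.inl))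
          (insert (Sum.inr false)
            ((Finset.univ.filter fun l : Bool × Fin n => τ l.2 ≠ l.1).image Sum.inl)) p := by
  refine ⟨?_, ?_, ?_, ?_, ?_⟩
  · rintro (⟨-, h⟩ | ⟨-, h⟩)
    · obtain ⟨l, -, hl⟩ := h ⟨0, hm⟩
      simp at hl
    · rcases h ⟨0, hn⟩ with h | h <;> simp at h
  · rintro (⟨h, -⟩ | ⟨h, -⟩) <;> simp at h
  · left
    refine ⟨Finset.mem_insert_self _ _, fun i => ?_⟩
    obtain ⟨l, hl, hτl⟩ := hτ i
    exact ⟨l, hl, Finset.mem_insert_of_mem (by simp [hτl])⟩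
  · right
    refine ⟨Finset.mem_insert_self _ _, fun v => ?_⟩
    cases h : τ v
    · left; exact Finset.mem_insert_of_mem (by simp [h])
    · right; exact Finset.mem_insert_of_mem (by simp [h])
  · rintro (l | b)
    · by_cases h : τ l.2 = l.1 <;> simp [cnt, h]
    · cases b <;> simp [cnt]
end

section
/- Let φ be a CNF formula and Γ(φ) the associated game on N = X ∪ {a,b}. If there exist winning coalitions S₃, S₄ such that ({a,b}, X, S₃, S₄) is a 2-trade application (with {a,b} and X losing), then φ is satisfiable. -/
lemma gammaW_aux {n m : ℕ} (C : Fin m → Finset (Bool × Fin n))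
    (S3 S4 : Finset (PlayerStd n))
    (h3 : S3 ∈ gammaW C) (h4 : S4 ∈ gammaW C)
    (key : ∀ p : PlayerStd n, (p ∈ S3 ↔ p ∉ S4))
    (ha3 : Sum.inr true ∈ S3) :
    ∃ τ : Fin n → Bool, ∀ i, ∃ l ∈ C i, τ l.2 = l.1 := by
  have ha4 : Sum.inr true ∉ S4 := (key _).mp ha3
  rcases h4 with ⟨h, _⟩ | ⟨hb4, hcov⟩
  · exact absurd h ha4
  have hb3 : Sum.inr false ∉ S3 := fun h => ((key _).mp h) hb4
  rcases h3 with ⟨_, hcl⟩ | ⟨h, _⟩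
  swap
  · exact absurd h hb3
  refine ⟨fun v => if Sum.inl (true, v) ∈ S3 then true else false, fun i => ?_⟩
  obtain ⟨l, hl, hlS3⟩ := hcl i
  refine ⟨l, hl, ?_⟩
  obtain ⟨s, v⟩ := l
  cases s
  · simp only
    rw [if_neg]
    intro ht
    rcases hcov v with h | h
    · exact ((key _).mp ht) h
    · exact ((key _).mp hlS3) h
  · simp only [if_pos hlS3]

/-- If there are winning coalitions `S₃, S₄` such that `({a,b}, X, S₃, S₄)` is a
2-trade application (with `{a,b}` and `X` losing), then `φ` is satisfiable. -/
theorem gammaW_two_trade_implies_satisfiable (n m : ℕ) (hn : 0 < n) (hm : 0 < m)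
    (C : Fin m → Finset (Bool × Fin n)) (hC : ∀ i, (C i).Nonempty)
    (S3 S4 : Finset (PlayerStd n))
    (hS1 : ({Sum.inr true, Sum.inr false} : Finset (PlayerStd n)) ∉ gammaW C)
    (hS2 : ((Finset.univ : Finset (Bool × Fin n)).image Sum.inl) ∉ gammaW C)
    (h3 : S3 ∈ gammaW C) (h4 : S4 ∈ gammaW C)
    (happ : ∀ p : PlayerStd n,
      cnt ({Sum.inr true, Sum.inr false} : Finset (PlayerStd n))
          ((Finset.univ : Finset (Bool × Fin n)).image Sum.inl) p =
      cnt S3 S4 p) :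
    ∃ τ : Fin n → Bool, ∀ i, ∃ l ∈ C i, τ l.2 = l.1 := by
  have key : ∀ p : PlayerStd n, (p ∈ S3 ↔ p ∉ S4) := by
    intro p
    have h := (happ p).symm
    rcases p with ⟨s, v⟩ | s <;>
      simp only [cnt, Finset.mem_image, Finset.mem_insert, Finset.mem_singleton,
        Finset.mem_univ] at h <;>
      [skip; cases s] <;>
      simp_all <;> split_ifs at h <;> simp_all
  have ha : Sum.inr true ∈ S3 ∨ Sum.inr true ∈ S4 := by
    by_contra hc
    push_neg at hc
    exact hc.1 ((key _).mpr hc.2)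
  rcases ha with h | h
  · exact gammaW_aux C S3 S4 h3 h4 key h
  · exact gammaW_aux C S4 S3 h4 h3 (fun p => by rw [key p]; tauto) h
end

section
/- Let (N,W) be a simple game with maximal losing coalitions L^M, and let S₁, S₂ be losing coalitions. Set U = S₁ ∪ S₂ and let F = { (S₁ ∪ S₂) \ L : L ∈ L^M, S₁ ∩ S₂ ⊆ L }. If there is a partition of U into disjoint sets U₁, U₂ such that every Z ∈ F meets both U₁ and U₂, then S₃ = U₁ ∪ (S₁ ∩ S₂) and S₄ = U₂ ∪ (S₁ ∩ S₂) are winning coalitions and (S₁,S₂,S₃,S₄) is a 2-trade application. -/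
/-- Every losing coalition is contained in a maximal losing coalition. -/
lemma exists_maximal_losing {N : Type*} [Fintype N] [DecidableEq N]
    (W : Set (Finset N)) [DecidablePred (· ∈ W)] (S : Finset N) (hS : S ∉ W) :
    ∃ L : Finset N, S ⊆ L ∧ L ∉ W ∧ ∀ T : Finset N, L ⊂ T → T ∈ W := by
  classical
  set F : Finset (Finset N) :=
    Finset.univ.filter (fun L => S ⊆ L ∧ L ∉ W) with hF
  have hne : F.Nonempty := ⟨S, by simp [hF, hS]⟩
  obtain ⟨L, hL, hmax⟩ := F.exists_max_image (fun L => L.card) hne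
  simp only [hF, Finset.mem_filter, Finset.mem_univ, true_and] at hL
  refine ⟨L, hL.1, hL.2, fun T hT => ?_⟩
  by_contra hTW
  have hTF : T ∈ F := by
    simp only [hF, Finset.mem_filter, Finset.mem_univ, true_and]
    exact ⟨hL.1.trans hT.subset, hTW⟩
  have := hmax T hTF
  exact absurd (Finset.card_lt_card hT) (not_lt.mpr this)

/-- If `(U₁, U₂)` is a partition of `S₁ ∪ S₂` such that every set
`(S₁ ∪ S₂) \ L` with `L` maximal losing and `S₁ ∩ S₂ ⊆ L` meets both `U₁` and
`U₂`, then `S₃ = U₁ ∪ (S₁ ∩ S₂)` and `S₄ = U₂ ∪ (S₁ ∩ S₂)` are winning and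
`(S₁,S₂,S₃,S₄)` is a 2-trade application. -/
theorem setSplitting_gives_two_trade
    {N : Type*} [Fintype N] [DecidableEq N] (W : Set (Finset N))
    (hfull : Finset.univ ∈ W) (hempty : (∅ : Finset N) ∉ W)
    (hmono : ∀ S T : Finset N, S ∈ W → S ⊆ T → T ∈ W)
    (S1 S2 : Finset N) (h1 : S1 ∉ W) (h2 : S2 ∉ W)
    (U1 U2 : Finset N) (hU : U1 ∪ U2 = S1 ∪ S2) (hdisj : U1 ∩ U2 = ∅)
    (hsplit : ∀ L : Finset N, L ∉ W → (∀ T : Finset N, L ⊂ T → T ∈ W) →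
      S1 ∩ S2 ⊆ L →
      (((S1 ∪ S2) \ L) ∩ U1).Nonempty ∧ (((S1 ∪ S2) \ L) ∩ U2).Nonempty) :
    (U1 ∪ S1 ∩ S2) ∈ W ∧ (U2 ∪ S1 ∩ S2) ∈ W ∧
    ∀ p : N, cnt S1 S2 p = cnt (U1 ∪ S1 ∩ S2) (U2 ∪ S1 ∩ S2) p := by
  classical
  have key : ∀ U : Finset N, U ⊆ S1 ∪ S2 → (U ∪ S1 ∩ S2) ∈ W ∨
      ∃ L, L ∉ W ∧ (∀ T : Finset N, L ⊂ T → T ∈ W) ∧ S1 ∩ S2 ⊆ L ∧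
        (((S1 ∪ S2) \ L) ∩ U) = ∅ := by
    intro U hUsub
    by_cases hW : (U ∪ S1 ∩ S2) ∈ W
    · exact Or.inl hW
    · obtain ⟨L, hsub, hLW, hLmax⟩ := exists_maximal_losing W _ hW
      refine Or.inr ⟨L, hLW, hLmax, (Finset.subset_union_right).trans hsub, ?_⟩
      ext x
      simp only [Finset.mem_inter, Finset.mem_sdiff, Finset.notMem_empty, iff_false]
      rintro ⟨⟨_, hxL⟩, hxU⟩
      exact hxL (hsub (Finset.mem_union_left _ hxU))
  have hU1 : U1 ⊆ S1 ∪ S2 := hU ▸ Finset.subset_union_left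
  have hU2 : U2 ⊆ S1 ∪ S2 := hU ▸ Finset.subset_union_right
  have hW1 : (U1 ∪ S1 ∩ S2) ∈ W := by
    rcases key U1 hU1 with h | ⟨L, hLW, hLmax, hLsub, hemp⟩
    · exact h
    · obtain ⟨hne1, _⟩ := hsplit L hLW hLmax hLsub
      rw [hemp] at hne1
      exact absurd hne1 (by simp)
  have hW2 : (U2 ∪ S1 ∩ S2) ∈ W := by
    rcases key U2 hU2 with h | ⟨L, hLW, hLmax, hLsub, hemp⟩
    · exact h
    · obtain ⟨_, hne2⟩ := hsplit L hLW hLmax hLsub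
      rw [hemp] at hne2
      exact absurd hne2 (by simp)
  refine ⟨hW1, hW2, fun p => ?_⟩
  have hmem : ∀ x, x ∈ U1 ∪ U2 ↔ x ∈ S1 ∪ S2 := fun x => by rw [hU]
  have hd : ∀ x, ¬(x ∈ U1 ∧ x ∈ U2) := fun x hx => by
    have : x ∈ U1 ∩ U2 := Finset.mem_inter.mpr hx
    simp [hdisj] at this
  have h := hmem p
  have hdp := hd p
  simp only [Finset.mem_union, Finset.mem_inter] at h hdp ⊢
  unfold cnt
  by_cases p1 : p ∈ S1 <;> by_cases p2 : p ∈ S2 <;>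
    by_cases q1 : p ∈ U1 <;> by_cases q2 : p ∈ U2 <;>
    simp_all
end

section
/- Let (N,W) be a simple game with maximal losing coalitions L^M and losing coalitions S₁, S₂. If (S₁,S₂,S₃,S₄) is a 2-trade application with S₃, S₄ winning, then setting R = { L ∈ L^M : S₁ ∩ S₂ ⊆ L } and Uᵢ = Sᵢ \ (⋂_{L ∈ R} L) for i ∈ {3,4}, the sets U₃ and U₄ are disjoint subsets of S₁ ∪ S₂ and every set Z = (S₁ ∪ S₂) \ L with L ∈ R satisfies Z ∩ U₃ ≠ ∅ and Z ∩ U₄ ≠ ∅ (i.e., U₃, U₄ split every such Z). -/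
open Classical in
/-- The intersection `⋂_{L ∈ R} L` of all maximal losing coalitions `L` with
`S₁ ∩ S₂ ⊆ L`, as a finset of players. -/
noncomputable def interR {N : Type*} [Fintype N] (W : Set (Finset N))
    (S1 S2 : Finset N) : Finset N :=
  Finset.univ.filter fun p =>
    ∀ L : Finset N, (L ∉ W ∧ ∀ T : Finset N, L ⊂ T → T ∈ W) → S1 ∩ S2 ⊆ L → p ∈ L

/-- If `(S₁,S₂,S₃,S₄)` is a 2-trade application with `S₁,S₂` losing and
`S₃,S₄` winning, then `U₃ = S₃ \ ⋂_{L ∈ R} L` and `U₄ = S₄ \ ⋂_{L ∈ R} L`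
(where `R` is the set of maximal losing coalitions containing `S₁ ∩ S₂`) are
disjoint subsets of `S₁ ∪ S₂` splitting every set `(S₁ ∪ S₂) \ L`, `L ∈ R`. -/
theorem two_trade_gives_setSplitting
    {N : Type*} [Fintype N] [DecidableEq N] (W : Set (Finset N))
    (hfull : Finset.univ ∈ W) (hempty : (∅ : Finset N) ∉ W)
    (hmono : ∀ S T : Finset N, S ∈ W → S ⊆ T → T ∈ W)
    (S1 S2 S3 S4 : Finset N) (h1 : S1 ∉ W) (h2 : S2 ∉ W)
    (h3 : S3 ∈ W) (h4 : S4 ∈ W)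
    (happ : ∀ p : N, cnt S1 S2 p = cnt S3 S4 p) :
    (S3 \ interR W S1 S2) ∩ (S4 \ interR W S1 S2) = ∅ ∧
    (S3 \ interR W S1 S2) ⊆ S1 ∪ S2 ∧
    (S4 \ interR W S1 S2) ⊆ S1 ∪ S2 ∧
    ∀ L : Finset N, L ∉ W → (∀ T : Finset N, L ⊂ T → T ∈ W) → S1 ∩ S2 ⊆ L →
      (((S1 ∪ S2) \ L) ∩ (S3 \ interR W S1 S2)).Nonempty ∧
      (((S1 ∪ S2) \ L) ∩ (S4 \ interR W S1 S2)).Nonempty := by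
  classical
  have hmemR : ∀ p, p ∈ interR W S1 S2 ↔
      ∀ L : Finset N, L ∉ W → (∀ T : Finset N, L ⊂ T → T ∈ W) → S1 ∩ S2 ⊆ L → p ∈ L := by
    intro p
    simp only [interR, Finset.mem_filter, Finset.mem_univ, true_and, and_imp]
    have heq : @Inter.inter (Finset N)
          (@Finset.instInter N (fun a b => Classical.propDecidable (a = b))) S1 S2
          = S1 ∩ S2 := by congr!
    constructor <;> intro h L hL1 hL2 hL3 <;>
      first
        | exact h L hL1 hL2 (heq ▸ hL3)
        | exact h L hL1 hL2 (heq.symm ▸ hL3)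
  -- players in both S3 and S4 are in both S1 and S2
  have h34 : ∀ p, p ∈ S3 → p ∈ S4 → p ∈ S1 ∩ S2 := by
    intro p hp3 hp4
    have := happ p
    rw [Finset.mem_inter]
    by_cases a : p ∈ S1 <;> by_cases b : p ∈ S2 <;>
      simp [cnt, a, b, hp3, hp4] at this ⊢
  have hsub : ∀ p, p ∈ S3 ∨ p ∈ S4 → p ∈ S1 ∪ S2 := by
    intro p hp
    have := happ p
    rw [Finset.mem_union]
    by_contra h
    push_neg at h
    rcases hp with hp | hp
    · by_cases d : p ∈ S4 <;> simp [cnt, h.1, h.2, hp, d] at this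
    · by_cases c : p ∈ S3 <;> simp [cnt, h.1, h.2, hp, c] at this
  have hS12R : ∀ p, p ∈ S1 ∩ S2 → p ∈ interR W S1 S2 := by
    intro p hp
    rw [hmemR]
    intro L _ _ hL2
    exact hL2 hp
  refine ⟨?_, ?_, ?_, ?_⟩
  · ext p
    simp only [Finset.mem_inter, Finset.mem_sdiff, Finset.notMem_empty, iff_false]
    rintro ⟨⟨hp3, hpi⟩, ⟨hp4, _⟩⟩
    exact hpi (hS12R p (h34 p hp3 hp4))
  · intro p hp
    rw [Finset.mem_sdiff] at hp
    exact hsub p (Or.inl hp.1)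
  · intro p hp
    rw [Finset.mem_sdiff] at hp
    exact hsub p (Or.inr hp.1)
  · intro L hLW hLmax hL12
    have hkey : ∀ S : Finset N, S ∈ W → (S ⊆ S3 ∪ S4 ∨ True) →
        (∃ p, p ∈ S ∧ p ∉ L) := by
      intro S hS _
      by_contra h
      push_neg at h
      exact hLW (hmono S L hS h)
    constructor
    · obtain ⟨p, hp3, hpL⟩ := hkey S3 h3 (Or.inr trivial)
      refine ⟨p, ?_⟩
      rw [Finset.mem_inter, Finset.mem_sdiff, Finset.mem_sdiff]
      refine ⟨⟨hsub p (Or.inl hp3), hpL⟩, hp3, ?_⟩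
      rw [hmemR]
      push_neg
      exact ⟨L, hLW, hLmax, hL12, hpL⟩
    · obtain ⟨p, hp4, hpL⟩ := hkey S4 h4 (Or.inr trivial)
      refine ⟨p, ?_⟩
      rw [Finset.mem_inter, Finset.mem_sdiff, Finset.mem_sdiff]
      refine ⟨⟨hsub p (Or.inr hp4), hpL⟩, hp4, ?_⟩
      rw [hmemR]
      push_neg
      exact ⟨L, hLW, hLmax, hL12, hpL⟩
end

section
/- Let Γ(φ,j) be the game for j ≥ 2 on N = X ∪ {a,b} ∪ {c₁ᵢ, c₂ᵢ : 3 ≤ i ≤ j}, where Y wins iff (a ∈ Y and Y meets every clause), or (b ∈ Y and Y contains xₖ or ¬xₖ for every variable k), or ({c₁ᵢ, c₂ᵢ} ⊆ Y for some i ∈ {3,…,j}). If φ is satisfiable with satisfying assignment τ, then the coalitions S_{j+1} = {a} ∪ {true literals of τ}, S_{j+2} = {b} ∪ {false literals of τ}, S_{j+i} = {c₁ᵢ, c₂ᵢ} for 3 ≤ i ≤ j are all winning; and for even j, the coalitions S₁ = X, S₂ = {a,b}, Sᵢ = {c₁ᵢ, c₁,ᵢ₊₁} for odd i ∈ {3,…,j−1},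 Sᵢ = {c₂,ᵢ₋₁, c₂ᵢ} for even i ∈ {4,…,j} are all losing, and together these 2j coalitions form a j-trade application. -/
/-- Players of the game `Γ(φ,j)`: a literal `(s, v)` (`x_v` if `s = true`,
`¬x_v` if `s = false`), the extra players `a` (`Sum.inl (Sum.inr true)`) and
`b` (`Sum.inl (Sum.inr false)`), and players `c₁ᵢ = Sum.inr (true, i)`,
`c₂ᵢ = Sum.inr (false, i)` (only those with `3 ≤ i ≤ j` are ever used). -/
abbrev PlayerExt (n : ℕ) := ((Bool × Fin n) ⊕ Bool) ⊕ (Bool × ℕ)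

def lit {n : ℕ} (l : Bool × Fin n) : PlayerExt n := Sum.inl (Sum.inl l)
def pa {n : ℕ} : PlayerExt n := Sum.inl (Sum.inr true)
def pb {n : ℕ} : PlayerExt n := Sum.inl (Sum.inr false)
def pc {n : ℕ} (s : Bool) (i : ℕ) : PlayerExt n := Sum.inr (s, i)

/-- Winning coalitions of `Γ(φ,j)`: `Y` wins iff (`a ∈ Y` and `Y` meets every
clause), or (`b ∈ Y` and `Y` covers every variable), or
(`{c₁ᵢ, c₂ᵢ} ⊆ Y` for some `i ∈ {3,…,j}`). -/
def gammaWExt {n m : ℕ} (C : Fin m → Finset (Bool × Fin n)) (j : ℕ) :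
    Set (Finset (PlayerExt n)) :=
  {Y | (pa ∈ Y ∧ ∀ i, ∃ l ∈ C i, lit l ∈ Y) ∨
       (pb ∈ Y ∧ ∀ v : Fin n, lit (true, v) ∈ Y ∨ lit (false, v) ∈ Y) ∨
       (∃ i : ℕ, 3 ≤ i ∧ i ≤ j ∧ pc true i ∈ Y ∧ pc false i ∈ Y)}

/-- The winning coalitions `S_{j+1},…,S_{2j}` of `Γ(φ,j)` (indexed by
`k : Fin j`, with `k = 0 ↦ S_{j+1} = {a} ∪ {true literals}`,
`k = 1 ↦ S_{j+2} = {b} ∪ {false literals}`, and `k ≥ 2 ↦ S_{j+k+1} =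
{c₁,ₖ₊₁, c₂,ₖ₊₁}`). -/
def SwExt {n : ℕ} (τ : Fin n → Bool) (j : ℕ) (k : Fin j) : Finset (PlayerExt n) :=
  if k.val = 0 then
    insert pa ((Finset.univ.filter fun l : Bool × Fin n => τ l.2 = l.1).image lit)
  else if k.val = 1 then
    insert pb ((Finset.univ.filter fun l : Bool × Fin n => τ l.2 ≠ l.1).image lit)
  else {pc true (k.val + 1), pc false (k.val + 1)}

/-- The losing coalitions `S₁,…,S_j` (for even `j`), indexed by `k : Fin j`:
`k = 0 ↦ S₁ = X`, `k = 1 ↦ S₂ = {a,b}`, and for `k ≥ 2` (so `i = k + 1 ∈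
{3,…,j}`): `{c₁ᵢ, c₁,ᵢ₊₁}` if `i` is odd, and `{c₂,ᵢ₋₁, c₂ᵢ}` if `i` is even. -/
def SlExt (n j : ℕ) (k : Fin j) : Finset (PlayerExt n) :=
  if k.val = 0 then (Finset.univ : Finset (Bool × Fin n)).image lit
  else if k.val = 1 then {pa, pb}
  else if k.val % 2 = 0 then {pc true (k.val + 1), pc true (k.val + 2)}
  else {pc false k.val, pc false (k.val + 1)}

theorem mem_Sw_lit {n j : ℕ} (τ : Fin n → Bool) (s : Bool) (v : Fin n) (k : Fin j) :
    lit (s, v) ∈ SwExt τ j k ↔ (k.val = 0 ∧ τ v = s) ∨ (k.val = 1 ∧ ¬ τ v = s) := by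
  unfold SwExt
  split_ifs <;> cases s <;> simp_all [lit, pa, pb, pc, Prod.ext_iff]

theorem mem_Sw_pab {n j : ℕ} (τ : Fin n → Bool) (s : Bool) (k : Fin j) :
    (Sum.inl (Sum.inr s) : PlayerExt n) ∈ SwExt τ j k ↔
      (k.val = 0 ∧ s = true) ∨ (k.val = 1 ∧ s = false) := by
  unfold SwExt
  split_ifs <;> cases s <;> simp_all [lit, pa, pb, pc]

theorem mem_Sw_pc {n j : ℕ} (τ : Fin n → Bool) (s : Bool) (i : ℕ) (k : Fin j) :
    (pc s i : PlayerExt n) ∈ SwExt τ j k ↔ (2 ≤ k.val ∧ i = k.val + 1) := by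
  unfold SwExt
  split_ifs <;> cases s <;> simp_all [lit, pa, pb, pc, Prod.ext_iff] <;> omega

theorem mem_Sl_lit {n j : ℕ} (s : Bool) (v : Fin n) (k : Fin j) :
    lit (s, v) ∈ SlExt n j k ↔ k.val = 0 := by
  unfold SlExt
  split_ifs <;> simp_all [lit, pa, pb, pc]

theorem mem_Sl_pab {n j : ℕ} (s : Bool) (k : Fin j) :
    (Sum.inl (Sum.inr s) : PlayerExt n) ∈ SlExt n j k ↔ k.val = 1 := by
  unfold SlExt
  split_ifs <;> simp_all [lit, pa, pb, pc]

theorem mem_Sl_pc {n j : ℕ} (s : Bool) (i : ℕ) (k : Fin j) :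
    (pc s i : PlayerExt n) ∈ SlExt n j k ↔
      (2 ≤ k.val ∧ ((s = true ∧ k.val % 2 = 0 ∧ (i = k.val + 1 ∨ i = k.val + 2)) ∨
        (s = false ∧ k.val % 2 = 1 ∧ (i = k.val ∨ i = k.val + 1)))) := by
  unfold SlExt
  split_ifs <;> cases s <;> simp_all [lit, pa, pb, pc, Prod.ext_iff] <;> omega

theorem card_filter_fin (j t : ℕ) (P : Fin j → Prop) [DecidablePred P]
    (h : ∀ k : Fin j, P k ↔ k.val = t) :
    (Finset.univ.filter P).card = if t < j then 1 else 0 := by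
  classical
  have he : Finset.univ.filter P = Finset.univ.filter (fun k : Fin j => k.val = t) :=
    Finset.filter_congr (fun k _ => by simp [h k])
  rw [he]
  by_cases ht : t < j
  · rw [if_pos ht]
    have : Finset.univ.filter (fun k : Fin j => k.val = t) = {⟨t, ht⟩} := by
      ext k; simp [Fin.ext_iff]
    simp [this]
  · rw [if_neg ht]
    have : Finset.univ.filter (fun k : Fin j => k.val = t) = ∅ := by
      ext k; simp only [Finset.mem_filter, Finset.mem_univ, true_and, Finset.notMem_empty,
        iff_false]
      omega
    simp [this]

/-- If `φ` is satisfiable and `j ≥ 2` is even, the coalitions above are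
respectively winning and losing and form a `j`-trade application of `Γ(φ,j)`. -/
theorem gammaWExt_satisfiable_j_trade (n m : ℕ) (hn : 0 < n) (hm : 0 < m)
    (C : Fin m → Finset (Bool × Fin n)) (hC : ∀ i, (C i).Nonempty)
    (j : ℕ) (hj : 2 ≤ j) (hje : j % 2 = 0)
    (τ : Fin n → Bool) (hτ : ∀ i, ∃ l ∈ C i, τ l.2 = l.1) :
    IsTradeApp (gammaWExt C j) j (SwExt τ j) (SlExt n j) := by
  refine ⟨?_, ?_, ?_⟩
  · -- winning
    intro k
    simp only [gammaWExt, Set.mem_setOf_eq]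
    by_cases h0 : k.val = 0
    · left
      constructor
      · unfold SwExt; rw [if_pos h0]; exact Finset.mem_insert_self _ _
      · intro i
        obtain ⟨l, hl, hlt⟩ := hτ i
        refine ⟨l, hl, ?_⟩
        unfold SwExt; rw [if_pos h0]
        simp [lit, pa, hlt]
    · by_cases h1 : k.val = 1
      · right; left
        constructor
        · unfold SwExt; rw [if_neg h0, if_pos h1]; exact Finset.mem_insert_self _ _
        · intro v
          cases hv : τ v with
          | true =>
            right
            unfold SwExt; rw [if_neg h0, if_pos h1]
            simp [lit, pb, hv]
          | false =>
            left
            unfold SwExt; rw [if_neg h0, if_pos h1]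
            simp [lit, pb, hv]
      · right; right
        refine ⟨k.val + 1, by omega, by have := k.isLt; omega, ?_, ?_⟩ <;>
          exact (mem_Sw_pc τ _ _ k).mpr ⟨by omega, rfl⟩
  · -- losing
    intro k hk
    simp only [gammaWExt, Set.mem_setOf_eq] at hk
    rcases hk with ⟨ha, hcl⟩ | ⟨hb, hcov⟩ | ⟨i, h3, hij, h1, h2⟩
    · have hk1 : k.val = 1 := (mem_Sl_pab true k).mp ha
      obtain ⟨⟨s, v⟩, -, hl⟩ := hcl ⟨0, hm⟩
      have := (mem_Sl_lit s v k).mp hl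
      omega
    · have hk1 : k.val = 1 := (mem_Sl_pab false k).mp hb
      rcases hcov ⟨0, hn⟩ with hl | hl <;>
      · have := (mem_Sl_lit _ _ k).mp hl
        omega
    · rw [mem_Sl_pc] at h1 h2
      simp at h1 h2
      omega
  · -- counting
    intro p
    rcases p with (⟨s, v⟩ | s) | ⟨s, i⟩
    · rw [card_filter_fin j (if τ v = s then 0 else 1) _
          (fun k => by rw [show (Sum.inl (Sum.inl (s, v)) : PlayerExt n) = lit (s, v) from rfl,
            mem_Sw_lit]; by_cases h : τ v = s <;> simp [h]),
        card_filter_fin j 0 _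
          (fun k => by rw [show (Sum.inl (Sum.inl (s, v)) : PlayerExt n) = lit (s, v) from rfl,
            mem_Sl_lit])]
      split_ifs <;> omega
    · rw [card_filter_fin j (if s then 0 else 1) _
          (fun k => by rw [mem_Sw_pab]; cases s <;> simp),
        card_filter_fin j 1 _ (fun k => mem_Sl_pab s k)]
      split_ifs <;> omega
    · have hw : ∀ k : Fin j, (Sum.inr (s, i) : PlayerExt n) ∈ SwExt τ j k ↔
          k.val = (if 3 ≤ i then i - 1 else j) := fun k => by
        rw [show (Sum.inr (s, i) : PlayerExt n) = pc s i from rfl, mem_Sw_pc]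
        have := k.isLt; split_ifs <;> omega
      cases s with
      | true =>
        rw [card_filter_fin j (if 3 ≤ i then i - 1 else j) _ hw,
          card_filter_fin j
            (if 3 ≤ i ∧ i % 2 = 1 then i - 1 else if 4 ≤ i ∧ i % 2 = 0 then i - 2 else j) _
            (fun k => by
              rw [show (Sum.inr (true, i) : PlayerExt n) = pc true i from rfl, mem_Sl_pc]
              have := k.isLt; simp only [true_and]; simp only [Bool.true_eq_false, false_and,
                or_false]
              split_ifs <;> omega)]
        split_ifs <;> omega
      | false =>
        rw [card_filter_fin j (if 3 ≤ i then i - 1 else j) _ hw,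
          card_filter_fin j
            (if 3 ≤ i ∧ i % 2 = 1 then i else if 3 ≤ i ∧ i % 2 = 0 then i - 1 else j) _
            (fun k => by
              rw [show (Sum.inr (false, i) : PlayerExt n) = pc false i from rfl, mem_Sl_pc]
              have := k.isLt; simp only [Bool.false_eq_true, false_and, false_or, true_and]
              split_ifs <;> omega)]
        split_ifs <;> omega
end
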